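/- arXiv:quant-ph/0001071 — 2 statements merged into one kernel-verified Lean document; each statement's English description precedes it below -/
import Mathlib

section
/- Let A and B be elements of a complex Banach algebra (for instance, n × n complex matrices or bounded operators on a finite-dimensional complex Hilbert space). Then the sequence (exp(A/n) · exp(B/n))^n converges in norm to exp(A + B) as n → ∞. -/
/-!
The function `t ↦ exp (t • A) * exp (t • B) - exp (t • (A + B))` vanishes to first order at `0`,
so `Tₙ = exp (A/n) * exp (B/n)` and `Sₙ = exp ((A+B)/n)` differ by `o(1/n)`. Both have norm at
most `exp ((‖A‖ + ‖B‖)/n)`, so telescoping `Tₙⁿ - Sₙⁿ` gives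
`‖Tₙⁿ - Sₙⁿ‖ ≤ n exp (‖A‖ + ‖B‖) ‖Tₙ - Sₙ‖ → 0`, while `Sₙⁿ = exp (A + B)`.
These norm estimates need `‖1‖ = 1`; a general Banach algebra reduces to that case through the
left regular representation `𝔸 → (𝔸 →L[ℂ] 𝔸)`, which can be inverted by evaluating at `1`.
-/

open NormedSpace Filter Topology

section PowSubPow

variable {R : Type*} [SeminormedRing R] [NormOneClass R]

theorem norm_pow_sub_pow_le {T S : R} {M : ℝ} (hT : ‖T‖ ≤ M) (hS : ‖S‖ ≤ M) (n : ℕ) :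
    ‖T ^ n - S ^ n‖ ≤ n * M ^ (n - 1) * ‖T - S‖ := by
  induction n with
  | zero => simp
  | succ n ih =>
    have hM : 0 ≤ M := (norm_nonneg T).trans hT
    have hTn : ‖T ^ n‖ ≤ M ^ n := (norm_pow_le T n).trans (pow_le_pow_left₀ (norm_nonneg T) hT n)
    have hpow : (n : ℝ) * M ^ (n - 1) * M = n * M ^ n := by
      cases n <;> simp [pow_succ, mul_assoc]
    calc ‖T ^ (n + 1) - S ^ (n + 1)‖ = ‖T ^ n * (T - S) + (T ^ n - S ^ n) * S‖ := by
          congr 1; noncomm_ring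
      _ ≤ ‖T ^ n‖ * ‖T - S‖ + ‖T ^ n - S ^ n‖ * ‖S‖ :=
          (norm_add_le _ _).trans (add_le_add (norm_mul_le _ _) (norm_mul_le _ _))
      _ ≤ M ^ n * ‖T - S‖ + n * M ^ (n - 1) * ‖T - S‖ * M := by gcongr
      _ = (n + 1 : ℕ) * M ^ (n + 1 - 1) * ‖T - S‖ := by
          push_cast; linear_combination ‖T - S‖ * hpow

theorem tendsto_pow_sub_pow_of_tendsto_mul_norm_sub {T S : ℕ → R} {c : ℝ} (hc : 0 ≤ c)
    (hT : ∀ n : ℕ, ‖T n‖ ≤ Real.exp (c / n)) (hS : ∀ n : ℕ, ‖S n‖ ≤ Real.exp (c / n))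
    (hTS : Tendsto (fun n : ℕ => n * ‖T n - S n‖) atTop (𝓝 0)) :
    Tendsto (fun n => T n ^ n - S n ^ n) atTop (𝓝 0) := by
  have hexp (n : ℕ) : Real.exp (c / n) ^ (n - 1) ≤ Real.exp c := by
    rw [← Real.exp_nat_mul, Real.exp_le_exp]
    rcases Nat.eq_zero_or_pos n with rfl | hn
    · simpa using hc
    · calc ((n - 1 : ℕ) : ℝ) * (c / n) ≤ n * (c / n) := by gcongr; exact_mod_cast Nat.sub_le n 1
        _ = c := by field_simp
  refine squeeze_zero_norm (fun n => ?_) (by simpa using hTS.const_mul (Real.exp c))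
  calc ‖T n ^ n - S n ^ n‖ ≤ n * Real.exp (c / n) ^ (n - 1) * ‖T n - S n‖ :=
        norm_pow_sub_pow_le (hT n) (hS n) n
    _ ≤ n * Real.exp c * ‖T n - S n‖ := by gcongr; exact hexp n
    _ = Real.exp c * (n * ‖T n - S n‖) := by ring

end PowSubPow

theorem norm_exp_le_exp_norm {𝔸 : Type*} [NormedRing 𝔸] [NormOneClass 𝔸] [NormedAlgebra ℚ 𝔸]
    [CompleteSpace 𝔸] (x : 𝔸) : ‖exp x‖ ≤ Real.exp ‖x‖ := by
  refine (exp_series_hasSum_exp' (𝕂 := ℚ) x).norm_le_of_bounded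
    (g := fun n => ‖x‖ ^ n / n.factorial) ?_ fun n => ?_
  · rw [Real.exp_eq_exp_ℝ]; exact expSeries_div_hasSum_exp ‖x‖
  · rw [norm_smul, div_eq_inv_mul]
    gcongr
    · simp [← Rat.norm_cast_real]
    · exact norm_pow_le x n

section Exponential

variable {𝕂 𝔸 : Type*} [RCLike 𝕂] [NormedRing 𝔸] [NormedAlgebra 𝕂 𝔸] [CompleteSpace 𝔸]

theorem exp_inv_natCast_smul_pow {n : ℕ} (hn : n ≠ 0) (x : 𝔸) :
    exp ((n : 𝕂)⁻¹ • x) ^ n = exp x := by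
  let : NormedAlgebra ℚ 𝔸 := .restrictScalars ℚ 𝕂 𝔸
  rw [← exp_nsmul, ← Nat.cast_smul_eq_nsmul 𝕂, smul_smul,
    mul_inv_cancel₀ (Nat.cast_ne_zero.2 hn), one_smul]

theorem hasDerivAt_exp_smul_mul_exp_smul_sub_exp_smul_add (A B : 𝔸) :
    HasDerivAt (fun t : 𝕂 => exp (t • A) * exp (t • B) - exp (t • (A + B))) 0 0 :=
  ((hasDerivAt_exp_smul_const A (0 : 𝕂)).fun_mul (hasDerivAt_exp_smul_const B 0)).fun_sub
    (hasDerivAt_exp_smul_const (A + B) 0) |>.congr_deriv (by simp)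

theorem tendsto_natCast_smul_exp_mul_exp_sub_exp_add (A B : 𝔸) :
    Tendsto (fun n : ℕ => (n : 𝕂) • (exp ((n : 𝕂)⁻¹ • A) * exp ((n : 𝕂)⁻¹ • B)
      - exp ((n : 𝕂)⁻¹ • (A + B)))) atTop (𝓝 0) := by
  have hslope := hasDerivAt_iff_tendsto_slope.1
    (hasDerivAt_exp_smul_mul_exp_smul_sub_exp_smul_add (𝕂 := 𝕂) A B)
  have hinv : Tendsto (fun n : ℕ => (n : 𝕂)⁻¹) atTop (𝓝[≠] 0) :=
    tendsto_nhdsWithin_iff.2 ⟨tendsto_inv_atTop_nhds_zero_nat,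
      eventually_ne_atTop 0 |>.mono fun n hn => by simpa using hn⟩
  simpa [Function.comp_def, slope_def_module] using hslope.comp hinv

theorem tendsto_exp_mul_exp_pow_of_normOneClass [NormOneClass 𝔸] (A B : 𝔸) :
    Tendsto (fun n : ℕ => (exp ((n : 𝕂)⁻¹ • A) * exp ((n : 𝕂)⁻¹ • B)) ^ n)
      atTop (𝓝 (exp (A + B))) := by
  let : NormedAlgebra ℚ 𝔸 := .restrictScalars ℚ 𝕂 𝔸
  have hnorm (n : ℕ) (x : 𝔸) : ‖(n : 𝕂)⁻¹ • x‖ = ‖x‖ / n := by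
    simp [norm_smul, div_eq_inv_mul]
  have hT (n : ℕ) : ‖exp ((n : 𝕂)⁻¹ • A) * exp ((n : 𝕂)⁻¹ • B)‖
      ≤ Real.exp ((‖A‖ + ‖B‖) / n) :=
    calc _ ≤ ‖exp ((n : 𝕂)⁻¹ • A)‖ * ‖exp ((n : 𝕂)⁻¹ • B)‖ := norm_mul_le _ _
      _ ≤ Real.exp (‖A‖ / n) * Real.exp (‖B‖ / n) := by
        rw [← hnorm, ← hnorm]
        gcongr <;> exact norm_exp_le_exp_norm _
      _ = Real.exp ((‖A‖ + ‖B‖) / n) := by rw [← Real.exp_add, add_div]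
  have hS (n : ℕ) : ‖exp ((n : 𝕂)⁻¹ • (A + B))‖ ≤ Real.exp ((‖A‖ + ‖B‖) / n) := by
    refine (norm_exp_le_exp_norm _).trans (Real.exp_le_exp.2 ?_)
    rw [hnorm]
    gcongr
    exact norm_add_le A B
  have hTS := (tendsto_natCast_smul_exp_mul_exp_sub_exp_add (𝕂 := 𝕂) A B).norm
  simp only [norm_smul, RCLike.norm_natCast, norm_zero] at hTS
  rw [← tendsto_sub_nhds_zero_iff]
  refine (tendsto_pow_sub_pow_of_tendsto_mul_norm_sub (by positivity) hT hS hTS).congr' ?_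
  filter_upwards [eventually_ne_atTop 0] with n hn
  rw [exp_inv_natCast_smul_pow hn]

end Exponential

namespace ContinuousLinearMap

variable (𝕜 𝔸 : Type*) [NontriviallyNormedField 𝕜] [NormedRing 𝔸] [NormedAlgebra 𝕜 𝔸]

noncomputable def mulAlgHom : 𝔸 →ₐ[𝕜] 𝔸 →L[𝕜] 𝔸 :=
  AlgHom.ofLinearMap (mul 𝕜 𝔸) (by ext; simp) fun x y => by ext; simp [mul_assoc]

@[simp]
theorem mulAlgHom_apply_apply (x y : 𝔸) : mulAlgHom 𝕜 𝔸 x y = x * y := rfl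

theorem continuous_mulAlgHom : Continuous (mulAlgHom 𝕜 𝔸) := (mul 𝕜 𝔸).continuous

variable {𝕜 𝔸} in
theorem tendsto_of_tendsto_mulAlgHom {α : Type*} {l : Filter α} {u : α → 𝔸} {a : 𝔸}
    (h : Tendsto (fun x => mulAlgHom 𝕜 𝔸 (u x)) l (𝓝 (mulAlgHom 𝕜 𝔸 a))) :
    Tendsto u l (𝓝 a) := by
  simpa [Function.comp_def] using ((apply 𝕜 𝔸 (1 : 𝔸)).continuous.tendsto _).comp h

end ContinuousLinearMap

/-- **Lie–Trotter product formula.** For elements `A`, `B` of a complex Banach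
algebra, the sequence `(exp(A/n) * exp(B/n))^n` converges in norm to
`exp (A + B)` as `n → ∞`. -/
theorem trotter_product_formula {𝔸 : Type*} [NormedRing 𝔸] [NormedAlgebra ℂ 𝔸]
    [CompleteSpace 𝔸] (A B : 𝔸) :
    Tendsto (fun n : ℕ => (exp ((n : ℂ)⁻¹ • A) * exp ((n : ℂ)⁻¹ • B)) ^ n)
      atTop (nhds (exp (A + B))) := by
  rcases subsingleton_or_nontrivial 𝔸 with _ | _
  · exact tendsto_const_nhds.congr fun n => Subsingleton.elim _ _
  let : NormedAlgebra ℚ 𝔸 := .restrictScalars ℚ ℂ 𝔸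
  let : NormedAlgebra ℚ (𝔸 →L[ℂ] 𝔸) := .restrictScalars ℚ ℂ (𝔸 →L[ℂ] 𝔸)
  refine ContinuousLinearMap.tendsto_of_tendsto_mulAlgHom (𝕜 := ℂ) ?_
  simpa [map_exp _ (ContinuousLinearMap.continuous_mulAlgHom ℂ 𝔸)] using
    tendsto_exp_mul_exp_pow_of_normOneClass (𝕂 := ℂ) (ContinuousLinearMap.mulAlgHom ℂ 𝔸 A)
      (ContinuousLinearMap.mulAlgHom ℂ 𝔸 B)
end

section
/- Let A and B be elements of a complex Banach algebra and let n ≥ 1 be a natural number. Then ‖(exp(A/n) · exp(B/n))^n − exp(A + B)‖ ≤ (‖A‖ + ‖B‖)² · exp(2(‖A‖ + ‖B‖)) / n. In particular the Trotter approximation error for the product formula is O(1/n). -/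
/-!
Telescoping: with `T = exp (A/n) * exp (B/n)` and `S = exp ((A+B)/n)`,
`T^n - S^n = ∑ T^k (T - S) S^(n-1-k)`. Left multiplication by `T` and right multiplication by `S`
have norm at most `e^t`, `t = (‖A‖+‖B‖)/n`, so the error is at most `n e^{(n-1)t} ‖T - S‖`.
Expanding `exp` into its series and bounding term by term by the scalar majorant series gives the
one-step estimate `‖T - S‖ ≤ 2 (e^t - 1 - t) ≤ t² e^t`, whence the total error is at most
`n t² e^{nt} = (‖A‖+‖B‖)² e^{‖A‖+‖B‖} / n`.
-/

open NormedSpace Finset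
open scoped Nat

namespace Real

theorem exp_sub_sum_range_eq_tsum (t : ℝ) (N : ℕ) :
    exp t - ∑ k ∈ range N, t ^ k / k ! = ∑' k, t ^ (k + N) / (k + N)! := by
  rw [exp_eq_exp_ℝ, ← (expSeries_div_hasSum_exp t).tsum_eq,
    ← (summable_pow_div_factorial t).sum_add_tsum_nat_add N, add_sub_cancel_left]

theorem exp_sub_sum_range_le {t : ℝ} (ht : 0 ≤ t) (N : ℕ) :
    exp t - ∑ k ∈ range N, t ^ k / k ! ≤ t ^ N / N ! * exp t := by
  have hfac (k : ℕ) : (k ! * N ! : ℝ) ≤ (k + N)! := by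
    exact_mod_cast Nat.le_of_dvd (Nat.factorial_pos _)
      (Nat.factorial_mul_factorial_dvd_factorial_add k N)
  rw [exp_sub_sum_range_eq_tsum, exp_eq_exp_ℝ, ← (expSeries_div_hasSum_exp t).tsum_eq,
    ← tsum_mul_left]
  refine Summable.tsum_le_tsum (fun k => ?_) ((summable_nat_add_iff N).mpr
    (summable_pow_div_factorial t)) ((summable_pow_div_factorial t).mul_left _)
  calc t ^ (k + N) / (k + N)! ≤ t ^ (k + N) / (k ! * N !) := by gcongr; exact hfac k
    _ = t ^ N / N ! * (t ^ k / k !) := by rw [pow_add]; ring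

theorem exp_sub_one_sub_le {t : ℝ} (ht : 0 ≤ t) : exp t - 1 - t ≤ t ^ 2 / 2 * exp t := by
  simpa [sum_range_succ, sub_sub] using exp_sub_sum_range_le ht 2

theorem exp_sub_one_sub_le_of_le {s t : ℝ} (hs : 0 ≤ s) (hst : s ≤ t) :
    exp s - 1 - s ≤ exp t - 1 - t := by
  have h : exp t = exp s * exp (t - s) := by rw [← exp_add, add_sub_cancel]
  nlinarith [add_one_le_exp (t - s), one_le_exp hs]

end Real

section Telescoping

variable {𝔸 : Type*} [NormedRing 𝔸] {S T : 𝔸} {M : ℝ}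

theorem norm_mul_pow_le_of_norm_mul_le (hM : 0 ≤ M) (hS : ∀ w, ‖w * S‖ ≤ M * ‖w‖)
    (w : 𝔸) (n : ℕ) :
    ‖w * S ^ n‖ ≤ M ^ n * ‖w‖ := by
  induction n with
  | zero => simp
  | succ n ih =>
    calc ‖w * S ^ (n + 1)‖ = ‖w * S ^ n * S‖ := by rw [pow_succ, mul_assoc]
      _ ≤ M * (M ^ n * ‖w‖) := (hS _).trans (by gcongr)
      _ = M ^ (n + 1) * ‖w‖ := by ring

theorem norm_pow_succ_sub_pow_succ_le (hM : 0 ≤ M) (hT : ∀ w, ‖T * w‖ ≤ M * ‖w‖)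
    (hS : ∀ w, ‖w * S‖ ≤ M * ‖w‖) (n : ℕ) :
    ‖T ^ (n + 1) - S ^ (n + 1)‖ ≤ (n + 1) * M ^ n * ‖T - S‖ := by
  induction n with
  | zero => simp
  | succ n ih =>
    have hsplit : T ^ (n + 2) - S ^ (n + 2) =
        T * (T ^ (n + 1) - S ^ (n + 1)) + (T - S) * S ^ (n + 1) := by
      rw [pow_succ' T, pow_succ' S]; noncomm_ring
    calc ‖T ^ (n + 2) - S ^ (n + 2)‖
        ≤ M * ((n + 1) * M ^ n * ‖T - S‖) + M ^ (n + 1) * ‖T - S‖ := by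
          rw [hsplit]
          exact (norm_add_le _ _).trans <| add_le_add ((hT _).trans (by gcongr))
            (norm_mul_pow_le_of_norm_mul_le hM hS _ _)
      _ = (↑(n + 1) + 1) * M ^ (n + 1) * ‖T - S‖ := by push_cast; ring

end Telescoping

namespace NormedSpace

variable {𝔸 : Type*} [NormedRing 𝔸] [NormedAlgebra ℚ 𝔸] [CompleteSpace 𝔸]

theorem norm_exp_sub_sum_range_le (x : 𝔸) {N : ℕ} (hN : 0 < N) :
    ‖exp x - ∑ k ∈ range N, (k !⁻¹ : ℚ) • x ^ k‖ ≤
      Real.exp ‖x‖ - ∑ k ∈ range N, ‖x‖ ^ k / k ! := by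
  have hterm (k : ℕ) : ‖((k + N)!⁻¹ : ℚ) • x ^ (k + N)‖ ≤ ‖x‖ ^ (k + N) / (k + N)! := by
    have hnorm : ‖((k + N)! : ℚ)‖ = (k + N)! := by
      rw [← Rat.norm_cast_real, Rat.cast_natCast, RCLike.norm_natCast]
    rw [norm_smul, norm_inv, hnorm, inv_mul_eq_div]
    gcongr
    exact norm_pow_le' x (by omega)
  have hsum : Summable fun k => ‖((k + N)!⁻¹ : ℚ) • x ^ (k + N)‖ :=
    (summable_nat_add_iff N).mpr (norm_expSeries_summable' x)
  have hsum' : Summable fun k => ‖x‖ ^ (k + N) / (k + N)! :=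
    (summable_nat_add_iff N).mpr (Real.summable_pow_div_factorial _)
  rw [← (exp_series_hasSum_exp' (𝕂 := ℚ) x).tsum_eq,
    ← (expSeries_summable' (𝕂 := ℚ) x).sum_add_tsum_nat_add N,
    add_sub_cancel_left, Real.exp_sub_sum_range_eq_tsum]
  exact (norm_tsum_le_tsum_norm hsum).trans (hsum.tsum_le_tsum hterm hsum')

theorem norm_exp_sub_one_le (x : 𝔸) : ‖exp x - 1‖ ≤ Real.exp ‖x‖ - 1 := by
  simpa using norm_exp_sub_sum_range_le x one_pos

theorem norm_exp_sub_one_sub_le (x : 𝔸) : ‖exp x - 1 - x‖ ≤ Real.exp ‖x‖ - 1 - ‖x‖ := by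
  simpa [sum_range_succ, sub_sub] using norm_exp_sub_sum_range_le x (N := 2) (by norm_num)

-- Stated for multiplication operators: `‖exp x‖ ≤ e^‖x‖` fails when `‖1‖ > 1`.
theorem norm_mul_exp_le (w x : 𝔸) : ‖w * exp x‖ ≤ Real.exp ‖x‖ * ‖w‖ :=
  calc ‖w * exp x‖ = ‖w + w * (exp x - 1)‖ := by noncomm_ring
    _ ≤ ‖w‖ + ‖w‖ * (Real.exp ‖x‖ - 1) :=
      (norm_add_le _ _).trans <| by
        gcongr; exact (norm_mul_le _ _).trans (by gcongr; exact norm_exp_sub_one_le x)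
    _ = Real.exp ‖x‖ * ‖w‖ := by ring

theorem norm_exp_mul_le (x w : 𝔸) : ‖exp x * w‖ ≤ Real.exp ‖x‖ * ‖w‖ :=
  calc ‖exp x * w‖ = ‖w + (exp x - 1) * w‖ := by noncomm_ring
    _ ≤ ‖w‖ + (Real.exp ‖x‖ - 1) * ‖w‖ :=
      (norm_add_le _ _).trans <| by
        gcongr; exact (norm_mul_le _ _).trans (by gcongr; exact norm_exp_sub_one_le x)
    _ = Real.exp ‖x‖ * ‖w‖ := by ring

theorem norm_exp_mul_exp_sub_exp_add_le (x y : 𝔸) :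
    ‖exp x * exp y - exp (x + y)‖ ≤ 2 * (Real.exp (‖x‖ + ‖y‖) - 1 - (‖x‖ + ‖y‖)) := by
  have hsplit : exp x * exp y - exp (x + y) = (exp x - 1 - x) * exp y + x * (exp y - 1)
      + (exp y - 1 - y) - (exp (x + y) - 1 - (x + y)) := by noncomm_ring
  have h₁ : ‖(exp x - 1 - x) * exp y‖ ≤ Real.exp ‖y‖ * (Real.exp ‖x‖ - 1 - ‖x‖) :=
    (norm_mul_exp_le _ _).trans (by gcongr; exact norm_exp_sub_one_sub_le x)
  have h₂ : ‖x * (exp y - 1)‖ ≤ ‖x‖ * (Real.exp ‖y‖ - 1) :=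
    (norm_mul_le _ _).trans (by gcongr; exact norm_exp_sub_one_le y)
  have h₃ : ‖exp (x + y) - 1 - (x + y)‖ ≤ Real.exp (‖x‖ + ‖y‖) - 1 - (‖x‖ + ‖y‖) :=
    (norm_exp_sub_one_sub_le _).trans
      (Real.exp_sub_one_sub_le_of_le (norm_nonneg _) (norm_add_le x y))
  calc ‖exp x * exp y - exp (x + y)‖
      ≤ ‖(exp x - 1 - x) * exp y‖ + ‖x * (exp y - 1)‖ + ‖exp y - 1 - y‖
        + ‖exp (x + y) - 1 - (x + y)‖ := by
        rw [hsplit]; exact (norm_sub_le _ _).trans (by gcongr; exact norm_add₃_le)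
    _ ≤ 2 * (Real.exp (‖x‖ + ‖y‖) - 1 - (‖x‖ + ‖y‖)) := by
        rw [Real.exp_add] at h₃ ⊢
        linarith [norm_exp_sub_one_sub_le y]

theorem norm_exp_mul_exp_pow_sub_exp_nsmul_le (x y : 𝔸) (n : ℕ) :
    ‖(exp x * exp y) ^ n - exp (n • (x + y))‖ ≤
      n * (‖x‖ + ‖y‖) ^ 2 * Real.exp (n * (‖x‖ + ‖y‖)) := by
  set t := ‖x‖ + ‖y‖
  obtain _ | n := n
  · simp
  have hT (w : 𝔸) : ‖exp x * exp y * w‖ ≤ Real.exp t * ‖w‖ :=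
    calc ‖exp x * exp y * w‖ = ‖exp x * (exp y * w)‖ := by rw [mul_assoc]
      _ ≤ Real.exp ‖x‖ * (Real.exp ‖y‖ * ‖w‖) :=
        (norm_exp_mul_le _ _).trans (by gcongr; exact norm_exp_mul_le _ _)
      _ = Real.exp t * ‖w‖ := by rw [Real.exp_add]; ring
  have hS (w : 𝔸) : ‖w * exp (x + y)‖ ≤ Real.exp t * ‖w‖ :=
    (norm_mul_exp_le _ _).trans (by gcongr; exact norm_add_le x y)
  have hstep : ‖exp x * exp y - exp (x + y)‖ ≤ t ^ 2 * Real.exp t := by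
    linarith [norm_exp_mul_exp_sub_exp_add_le x y,
      Real.exp_sub_one_sub_le (by positivity : 0 ≤ t)]
  rw [exp_nsmul]
  calc ‖(exp x * exp y) ^ (n + 1) - exp (x + y) ^ (n + 1)‖
      ≤ (n + 1) * Real.exp t ^ n * ‖exp x * exp y - exp (x + y)‖ :=
        norm_pow_succ_sub_pow_succ_le (Real.exp_pos t).le hT hS n
    _ ≤ (n + 1) * Real.exp t ^ n * (t ^ 2 * Real.exp t) := by gcongr
    _ = ↑(n + 1) * t ^ 2 * Real.exp (↑(n + 1) * t) := by
        rw [← Real.exp_nat_mul, Nat.cast_succ, add_one_mul (n : ℝ) t, Real.exp_add (n * t) t]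
        ring

end NormedSpace

/-- **Quantitative Trotter bound.** For elements `A`, `B` of a complex Banach
algebra and `n ≥ 1`,
`‖(exp(A/n)·exp(B/n))^n − exp(A+B)‖ ≤ (‖A‖+‖B‖)² · exp(2(‖A‖+‖B‖)) / n`,
so the Trotter product-formula error is `O(1/n)`. -/
theorem trotter_error_bound {𝔸 : Type*} [NormedRing 𝔸] [NormedAlgebra ℂ 𝔸]
    [CompleteSpace 𝔸] (A B : 𝔸) (n : ℕ) (hn : 1 ≤ n) :
    ‖(exp ((n : ℂ)⁻¹ • A) * exp ((n : ℂ)⁻¹ • B)) ^ n - exp (A + B)‖ ≤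
      (‖A‖ + ‖B‖) ^ 2 * Real.exp (2 * (‖A‖ + ‖B‖)) / n := by
  -- `exp` does not depend on the choice of `ℚ`-algebra structure.
  let _ : NormedAlgebra ℚ 𝔸 := NormedAlgebra.restrictScalars ℚ ℂ 𝔸
  have hn₀ : (n : ℝ) ≠ 0 := by positivity
  have hnC : (n : ℂ) ≠ 0 := by exact_mod_cast hn₀
  set r := ‖A‖ + ‖B‖
  have hsum : n • ((n : ℂ)⁻¹ • A + (n : ℂ)⁻¹ • B) = A + B := by
    rw [← smul_add, ← Nat.cast_smul_eq_nsmul ℂ, smul_smul, mul_inv_cancel₀ hnC, one_smul]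
  have hnorm : ‖(n : ℂ)⁻¹ • A‖ + ‖(n : ℂ)⁻¹ • B‖ = r / n := by
    simp only [norm_smul, norm_inv, RCLike.norm_natCast]; ring
  calc _ ≤ n * (r / n) ^ 2 * Real.exp (n * (r / n)) := by
        simpa only [hsum, hnorm] using
          norm_exp_mul_exp_pow_sub_exp_nsmul_le ((n : ℂ)⁻¹ • A) ((n : ℂ)⁻¹ • B) n
    _ = r ^ 2 * Real.exp r / n := by field_simp
    _ ≤ r ^ 2 * Real.exp (2 * r) / n := by gcongr; linarith [show 0 ≤ r by positivity]
end
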